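/- arXiv:2403.01940 — 2 statements merged into one kernel-verified Lean document; each statement's English description precedes it below -/
import Mathlib

section
/- Let n ≥ 0 be an integer and let s_n(δ) denote the unique positive solution of e^s = 1 + s/1! + ... + s^n/n! + s^{n+1}/(δ·n!) for δ ∈ (0, n+1). Then s_n is differentiable and s_n'(δ) = -(1/δ)·s_n(δ)/(s_n(δ) - (n+1-δ)); in particular s_n is strictly decreasing on (0, n+1). -/
open Real Finset



noncomputable def T (n : ℕ) (s : ℝ) : ℝ := ∑ k ∈ Finset.range (n + 1), s ^ k / (Nat.factorial k)

noncomputable def E (n : ℕ) (s : ℝ) : ℝ := Real.exp s - T n s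

lemma T_succ (n : ℕ) (s : ℝ) : T (n+1) s = T n s + s^(n+1) / (Nat.factorial (n+1)) := by
  simp [T, Finset.sum_range_succ]

lemma hasDerivAt_T (n : ℕ) (s : ℝ) :
    HasDerivAt (T n) (T n s - s^n / (Nat.factorial n)) s := by
  induction n with
  | zero =>
      have : (T 0) = fun _ : ℝ => (1:ℝ) := by funext x; simp [T]
      rw [this]
      simpa [T] using (hasDerivAt_const s (1:ℝ))
  | succ n ih =>
      have h2 : HasDerivAt (fun x : ℝ => x^(n+1) / (Nat.factorial (n+1)))
          (((n:ℝ)+1) * s^n / (Nat.factorial (n+1))) s := by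
        simpa using ((hasDerivAt_pow (n+1) s).div_const (Nat.factorial (n+1) : ℝ))
      have hfun : (fun x : ℝ => T n x + x^(n+1) / (Nat.factorial (n+1))) = T (n+1) := by
        funext x; exact (T_succ n x).symm
      have : HasDerivAt (fun x : ℝ => T n x + x^(n+1) / (Nat.factorial (n+1))) _ s := ih.add h2
      rw [hfun] at this
      convert this using 1
      have hn : (Nat.factorial n : ℝ) ≠ 0 := Nat.cast_ne_zero.2 (Nat.factorial_ne_zero n)
      have hn1 : (Nat.factorial (n+1) : ℝ) ≠ 0 := Nat.cast_ne_zero.2 (Nat.factorial_ne_zero (n+1))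
      rw [T_succ]
      have hfac : (Nat.factorial (n+1) : ℝ) = ((n:ℝ)+1) * Nat.factorial n := by
        push_cast [Nat.factorial_succ]; ring
      rw [hfac]
      field_simp [hfac]
      ring

lemma hasDerivAt_E (n : ℕ) (s : ℝ) :
    HasDerivAt (E n) (E n s + s^n / (Nat.factorial n)) s := by
  have : HasDerivAt (fun x => Real.exp x - T n x) _ s := (Real.hasDerivAt_exp s).sub (hasDerivAt_T n s)
  have hfun : (fun x => Real.exp x - T n x) = E n := rfl
  rw [hfun] at this
  convert this using 1
  simp [E]; ring

lemma E_pos (n : ℕ) {s : ℝ} (hs : 0 < s) : 0 < E n s := by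
  have h := Real.sum_le_exp_of_nonneg hs.le (n+2)
  have hT : T (n+1) s ≤ Real.exp s := by
    simpa [T] using h
  have hp : 0 < s^(n+1) / (Nat.factorial (n+1) : ℝ) :=
    div_pos (pow_pos hs _) (by positivity)
  have := T_succ n s
  simp only [E]
  linarith [hT, this]


noncomputable def psi (n : ℕ) (s : ℝ) : ℝ := ((n:ℝ)+1-s) * E n s - s^(n+1) / (Nat.factorial n)

lemma hasDerivAt_psi (n : ℕ) (s : ℝ) :
    HasDerivAt (psi n) (((n:ℝ)-s) * E n s - s^(n+1) / (Nat.factorial n)) s := by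
  have h1 : HasDerivAt (fun x : ℝ => ((n:ℝ)+1-x)) (-1) s := by
    simpa using ((hasDerivAt_id s).const_sub ((n:ℝ)+1))
  have h2 := (h1.mul (hasDerivAt_E n s))
  have h3 : HasDerivAt (fun x : ℝ => x^(n+1) / (Nat.factorial n))
      (((n:ℝ)+1) * s^n / (Nat.factorial n)) s := by
    simpa using ((hasDerivAt_pow (n+1) s).div_const (Nat.factorial n : ℝ))
  have : HasDerivAt (fun x => ((n:ℝ)+1-x) * E n x - x^(n+1) / (Nat.factorial n)) _ s := h2.sub h3
  have hfun : (fun x => ((n:ℝ)+1-x) * E n x - x^(n+1) / (Nat.factorial n)) = psi n := rfl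
  rw [hfun] at this
  convert this using 1
  have hn : (Nat.factorial n : ℝ) ≠ 0 := Nat.cast_ne_zero.2 (Nat.factorial_ne_zero n)
  field_simp
  ring

lemma T_zero (n : ℕ) : T n 0 = 1 := by
  induction n with
  | zero => simp [T]
  | succ n ih => rw [T_succ, ih]; simp

lemma psi_zero (n : ℕ) : psi n 0 = 0 := by
  simp [psi, E, T_zero]

lemma neg_of_deriv {f f' : ℝ → ℝ} (hf : ∀ s, HasDerivAt f (f' s) s) (h0 : f 0 = 0)
    (hneg : ∀ s, 0 < s → f' s < 0) : ∀ s, 0 < s → f s < 0 := by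
  intro s hs
  have hanti : StrictAntiOn f (Set.Ici 0) := by
    apply strictAntiOn_of_deriv_neg (convex_Ici 0)
    · exact (fun x _ => (hf x).continuousAt.continuousWithinAt)
    · intro x hx
      rw [interior_Ici] at hx
      rw [(hf x).deriv]
      exact hneg x hx
  have := hanti (Set.self_mem_Ici) (Set.mem_Ici.2 hs.le) hs
  rwa [h0] at this

lemma psi_neg (n : ℕ) : ∀ s, 0 < s → psi n s < 0 := by
  induction n with
  | zero =>
      apply neg_of_deriv (hasDerivAt_psi 0) (psi_zero 0)
      intro s hs
      have hE : E 0 s = Real.exp s - 1 := by simp [E, T]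
      have := Real.exp_pos s
      simp only [Nat.cast_zero, hE, Nat.factorial_zero, Nat.cast_one]
      nlinarith
  | succ n ih =>
      apply neg_of_deriv (hasDerivAt_psi (n+1)) (psi_zero (n+1))
      intro s hs
      have hkey : ((((n:ℕ)+1:ℕ):ℝ)-s) * E (n+1) s - s^(n+2) / (Nat.factorial (n+1)) = psi n s := by
        have hE : E (n+1) s = E n s - s^(n+1) / (Nat.factorial (n+1)) := by
          simp [E, T_succ n s]; ring
        have hfac : (Nat.factorial (n+1) : ℝ) = ((n:ℝ)+1) * Nat.factorial n := by
          push_cast [Nat.factorial_succ]; ring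
        have hn : (Nat.factorial n : ℝ) ≠ 0 := Nat.cast_ne_zero.2 (Nat.factorial_ne_zero n)
        simp only [psi, hE, hfac]
        have h1 : ((n:ℝ)+1) ≠ 0 := by positivity
        push_cast
        field_simp
        ring
      push_cast at hkey ⊢
      rw [hkey]
      exact ih s hs


noncomputable def g (n : ℕ) (s : ℝ) : ℝ := s^(n+1) / ((Nat.factorial n : ℝ) * E n s)

noncomputable def gd (n : ℕ) (s : ℝ) : ℝ :=
  (((n:ℝ)+1) * s^n * ((Nat.factorial n:ℝ) * E n s)
    - s^(n+1) * ((Nat.factorial n:ℝ) * E n s + s^n)) / ((Nat.factorial n:ℝ) * E n s)^2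

lemma hasDerivAt_g (n : ℕ) {s : ℝ} (hs : 0 < s) : HasDerivAt (g n) (gd n s) s := by
  have hn : (Nat.factorial n : ℝ) ≠ 0 := Nat.cast_ne_zero.2 (Nat.factorial_ne_zero n)
  have hv : HasDerivAt (fun x => (Nat.factorial n : ℝ) * E n x)
      ((Nat.factorial n:ℝ) * E n s + s^n) s := by
    have := (hasDerivAt_E n s).const_mul (Nat.factorial n : ℝ)
    rw [mul_add, mul_div_cancel₀ _ hn] at this
    exact this
  have hu : HasDerivAt (fun x : ℝ => x^(n+1)) (((n:ℝ)+1) * s^n) s := by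
    simpa using hasDerivAt_pow (n+1) s
  have hvne : (Nat.factorial n : ℝ) * E n s ≠ 0 := by
    have := E_pos n hs
    have h2 : (0:ℝ) < Nat.factorial n := by positivity
    positivity
  exact hu.div hv hvne

lemma gd_neg (n : ℕ) {s : ℝ} (hs : 0 < s) : gd n s < 0 := by
  have hn : (0:ℝ) < Nat.factorial n := by positivity
  have hE := E_pos n hs
  have hpsi := psi_neg n s hs
  have hnum : (((n:ℝ)+1) * s^n * ((Nat.factorial n:ℝ) * E n s)
      - s^(n+1) * ((Nat.factorial n:ℝ) * E n s + s^n))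
      = s^n * (Nat.factorial n:ℝ) * psi n s := by
    simp only [psi]
    field_simp
    ring
  rw [gd, hnum]
  apply div_neg_of_neg_of_pos
  · have h1 : 0 < s^n := pow_pos hs n
    have h2 : (0:ℝ) < Nat.factorial n := by positivity
    have : 0 < s^n * (Nat.factorial n:ℝ) := mul_pos h1 h2
    nlinarith
  · positivity

lemma g_strictAntiOn (n : ℕ) : StrictAntiOn (g n) (Set.Ioi 0) := by
  apply strictAntiOn_of_deriv_neg (convex_Ioi 0)
  · exact fun x hx => (hasDerivAt_g n hx).continuousAt.continuousWithinAt
  · intro x hx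
    rw [interior_Ioi] at hx
    rw [(hasDerivAt_g n hx).deriv]
    exact gd_neg n hx

theorem stmt6 (n : ℕ) (sn : ℝ → ℝ)
    (hsn : ∀ δ ∈ Set.Ioo (0 : ℝ) ((n : ℝ) + 1), 0 < sn δ ∧
      Real.exp (sn δ) = T n (sn δ) + (sn δ) ^ (n + 1) / (δ * Nat.factorial n)) :
    (∀ δ ∈ Set.Ioo (0 : ℝ) ((n : ℝ) + 1),
      HasDerivAt sn (-(1 / δ) * sn δ / (sn δ - ((n : ℝ) + 1 - δ))) δ) ∧
    StrictAntiOn sn (Set.Ioo (0 : ℝ) ((n : ℝ) + 1)) := by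
  have hfac : (0:ℝ) < Nat.factorial n := by positivity
  -- key algebraic identity
  have key : ∀ δ ∈ Set.Ioo (0:ℝ) ((n:ℝ)+1),
      (Nat.factorial n : ℝ) * E n (sn δ) = (sn δ)^(n+1) / δ := by
    intro δ hδ
    obtain ⟨hpos, heq⟩ := hsn δ hδ
    have hδ0 : (0:ℝ) < δ := hδ.1
    have hE : E n (sn δ) = (sn δ)^(n+1) / (δ * Nat.factorial n) := by
      simp [E, heq]
    rw [hE]
    field_simp
  have g_sn : ∀ δ ∈ Set.Ioo (0:ℝ) ((n:ℝ)+1), g n (sn δ) = δ := by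
    intro δ hδ
    obtain ⟨hpos, _⟩ := hsn δ hδ
    have hδ0 : (0:ℝ) < δ := hδ.1
    rw [g, key δ hδ]
    have hsne : (sn δ)^(n+1) ≠ 0 := (pow_pos hpos _).ne'
    field_simp
  -- sn δ > n + 1 - δ
  have s_gt : ∀ δ ∈ Set.Ioo (0:ℝ) ((n:ℝ)+1), (n:ℝ) + 1 - δ < sn δ := by
    intro δ hδ
    obtain ⟨hpos, _⟩ := hsn δ hδ
    have hδ0 : (0:ℝ) < δ := hδ.1
    have hψ := psi_neg n (sn δ) hpos
    have hE := E_pos n hpos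
    have hkey := key δ hδ
    have hsn1 : (sn δ)^(n+1) / (Nat.factorial n : ℝ) = δ * E n (sn δ) := by
      field_simp at hkey ⊢
      linarith [hkey]
    rw [psi, hsn1] at hψ
    nlinarith
  -- strict antitonicity
  have hanti : StrictAntiOn sn (Set.Ioo (0 : ℝ) ((n : ℝ) + 1)) := by
    intro a ha b hb hab
    have hapos := (hsn a ha).1
    have hbpos := (hsn b hb).1
    rcases lt_trichotomy (sn b) (sn a) with h | h | h
    · exact h
    · exfalso
      have : a = b := by rw [← g_sn a ha, ← g_sn b hb, h]
      exact absurd this hab.ne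
    · exfalso
      have := g_strictAntiOn n (Set.mem_Ioi.2 hapos) (Set.mem_Ioi.2 hbpos) h
      rw [g_sn a ha, g_sn b hb] at this
      exact absurd this (not_lt.2 hab.le)
  -- continuity
  have hcont : ∀ δ0 ∈ Set.Ioo (0:ℝ) ((n:ℝ)+1), ContinuousAt sn δ0 := by
    intro δ0 hδ0
    have hs0pos := (hsn δ0 hδ0).1
    rw [Metric.continuousAt_iff]
    intro ε hε
    set s0 := sn δ0 with hs0def
    set ε' := min (ε/2) (s0/2) with hε'def
    have hε'pos : 0 < ε' := lt_min (by linarith) (by linarith)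
    have hε'le : ε' ≤ ε/2 := min_le_left _ _
    have ha : 0 < s0 - ε' := by
      have := min_le_right (ε/2) (s0/2); have : ε' ≤ s0/2 := this; linarith
    have hb : (0:ℝ) < s0 + ε' := by linarith
    have hga : δ0 < g n (s0 - ε') := by
      have := g_strictAntiOn n (Set.mem_Ioi.2 ha) (Set.mem_Ioi.2 hs0pos)
        (by linarith : s0 - ε' < s0)
      rw [g_sn δ0 hδ0] at this
      exact this
    have hgb : g n (s0 + ε') < δ0 := by
      have := g_strictAntiOn n (Set.mem_Ioi.2 hs0pos) (Set.mem_Ioi.2 hb)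
        (by linarith : s0 < s0 + ε')
      rw [g_sn δ0 hδ0] at this
      exact this
    refine ⟨min (min (g n (s0-ε') - δ0) (δ0 - g n (s0+ε'))) (min δ0 ((n:ℝ)+1-δ0)), ?_, ?_⟩
    · have h1 := hδ0.1; have h2 := hδ0.2
      apply lt_min (lt_min (by linarith) (by linarith)) (lt_min (by linarith) (by linarith))
    · intro x hx
      rw [Real.dist_eq] at hx ⊢
      rw [lt_min_iff, lt_min_iff, lt_min_iff] at hx
      obtain ⟨⟨hx1, hx2⟩, hx3, hx4⟩ := hx
      rw [abs_lt] at hx1 hx2 hx3 hx4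
      have hxIoo : x ∈ Set.Ioo (0:ℝ) ((n:ℝ)+1) := ⟨by linarith [hx3.1], by linarith [hx4.2]⟩
      have hxpos := (hsn x hxIoo).1
      have hgx := g_sn x hxIoo
      have h1 : s0 - ε' < sn x := by
        by_contra h
        push_neg at h
        have : g n (s0 - ε') ≤ g n (sn x) :=
          (g_strictAntiOn n).antitoneOn (Set.mem_Ioi.2 hxpos) (Set.mem_Ioi.2 ha) h
        rw [hgx] at this
        linarith [hx1.2]
      have h2 : sn x < s0 + ε' := by
        by_contra h
        push_neg at h
        have : g n (sn x) ≤ g n (s0 + ε') :=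
          (g_strictAntiOn n).antitoneOn (Set.mem_Ioi.2 hb) (Set.mem_Ioi.2 hxpos) h
        rw [hgx] at this
        linarith [hx2.1]
      rw [abs_lt]
      constructor <;> [linarith; linarith]
  -- derivative
  refine ⟨?_, hanti⟩
  intro δ hδ
  have hδ0 : (0:ℝ) < δ := hδ.1
  have hpos := (hsn δ hδ).1
  have hD : HasDerivAt sn (gd n (sn δ))⁻¹ δ := by
    apply HasDerivAt.of_local_left_inverse (hcont δ hδ)
      (hasDerivAt_g n hpos) (gd_neg n hpos).ne
    filter_upwards [isOpen_Ioo.mem_nhds hδ] with x hx using g_sn x hx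
  have hgt := s_gt δ hδ
  have hval : (gd n (sn δ))⁻¹ = -(1 / δ) * sn δ / (sn δ - ((n : ℝ) + 1 - δ)) := by
    have hkey := key δ hδ
    have hgd : gd n (sn δ) = δ * (((n:ℝ)+1) - sn δ - δ) / sn δ := by
      rw [gd, hkey]
      have hsne : (sn δ)^(n+1) ≠ 0 := (pow_pos hpos _).ne'
      field_simp
      ring
    rw [hgd, inv_div]
    have hne : sn δ - ((n:ℝ)+1-δ) ≠ 0 := by linarith
    have hne2 : (n:ℝ)+1 - sn δ - δ ≠ 0 := by linarith
    field_simp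
    ring
  rwa [hval] at hD
end

section
/- Let n ≥ 0 be an integer and δ ∈ (0, n+1). Then ln((n+1)/δ) + (n+1-δ) < s_n(δ) < (n+1-δ) + (n+1-δ)/δ. -/
open Real Finset

set_option maxHeartbeats 1000000

noncomputable def c (n k : ℕ) : ℝ := (Nat.factorial n : ℝ) / (Nat.factorial (n + k + 1) : ℝ)

lemma c_pos (n k : ℕ) : 0 < c n k := by unfold c; positivity

lemma c_zero' (n : ℕ) : ((n : ℝ) + 1) * c n 0 = 1 := by
  unfold c
  rw [show n + 0 + 1 = n + 1 from rfl, Nat.factorial_succ]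
  push_cast
  have h : (Nat.factorial n : ℝ) ≠ 0 := by positivity
  field_simp

lemma c_succ (n k : ℕ) : c n k = ((n : ℝ) + k + 2) * c n (k + 1) := by
  have gen : ∀ (a C X : ℝ), C ≠ 0 → X ≠ 0 → a / X = C * (a / (C * X)) := by
    intro a C X hC hX; field_simp
  unfold c
  have e : (Nat.factorial (n + (1 + k) + 1) : ℝ)
      = ((n:ℝ) + k + 2) * (Nat.factorial (n + k + 1) : ℝ) := by
    rw [show n + (1 + k) + 1 = (n + k + 1) + 1 from by omega, Nat.factorial_succ]
    push_cast; ring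
  rw [show n + (k + 1) + 1 = n + (1 + k) + 1 from by omega, e]
  exact gen _ _ _ (by positivity) (by positivity)

lemma c_le (n k : ℕ) : c n k ≤ 1 / (Nat.factorial k : ℝ) := by
  unfold c
  rw [div_le_div_iff₀ (by positivity) (by positivity), one_mul]
  have h : (Nat.factorial n * Nat.factorial k : ℕ) ≤ Nat.factorial (n + k + 1) := by
    calc Nat.factorial n * Nat.factorial k ≤ Nat.factorial (n + k) :=
          Nat.le_of_dvd (Nat.factorial_pos _) (Nat.factorial_mul_factorial_dvd_factorial_add n k)
      _ ≤ Nat.factorial (n + k + 1) := Nat.factorial_le (Nat.le_succ _)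
  exact_mod_cast h

lemma fact_ineq (n : ℕ) : ∀ i j : ℕ, Nat.factorial (n+i+1) * Nat.factorial (n+j+1) ≤
    Nat.factorial (n+1) * Nat.factorial (n+i+j+1) := by
  intro i
  induction i with
  | zero => intro j; simp only [Nat.add_zero]; rw [Nat.mul_comm]
  | succ i ih =>
    intro j
    have h1 : n + (i+1) + 1 = (n + i + 1) + 1 := by omega
    have h2 : n + (i+1) + j + 1 = (n + i + j + 1) + 1 := by omega
    rw [h1, h2, Nat.factorial_succ, Nat.factorial_succ]
    calc (n + i + 1 + 1) * Nat.factorial (n+i+1) * Nat.factorial (n+j+1)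
        = (n + i + 1 + 1) * (Nat.factorial (n+i+1) * Nat.factorial (n+j+1)) := by ring
      _ ≤ (n + i + 1 + 1) * (Nat.factorial (n+1) * Nat.factorial (n+i+j+1)) :=
          Nat.mul_le_mul_left _ (ih j)
      _ ≤ (n + i + j + 1 + 1) * (Nat.factorial (n+1) * Nat.factorial (n+i+j+1)) :=
          Nat.mul_le_mul_right _ (by omega)
      _ = Nat.factorial (n+1) * ((n + i + j + 1 + 1) * Nat.factorial (n+i+j+1)) := by ring

lemma term_ineq (n i j : ℕ) : c n (i + j) ≤ ((n : ℝ) + 1) * (c n i * c n j) := by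
  have key := fact_ineq n i j
  have h1 : (0:ℝ) < Nat.factorial (n + (i+j) + 1) := by positivity
  have h2 : (0:ℝ) < (Nat.factorial (n+i+1) : ℝ) * Nat.factorial (n+j+1) := by positivity
  have hrhs : ((n : ℝ) + 1) * (c n i * c n j)
      = (((n:ℝ)+1) * (Nat.factorial n * Nat.factorial n)) /
        ((Nat.factorial (n+i+1) : ℝ) * Nat.factorial (n+j+1)) := by
    unfold c; field_simp
  rw [hrhs]
  unfold c
  rw [div_le_div_iff₀ h1 h2]
  have hcast : ((Nat.factorial (n+i+1) : ℝ) * Nat.factorial (n+j+1)) ≤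
      ((n:ℝ)+1) * Nat.factorial n * Nat.factorial (n+(i+j)+1) := by
    have : ((n:ℝ)+1) * Nat.factorial n = Nat.factorial (n+1) := by
      rw [Nat.factorial_succ]; push_cast; ring
    rw [this, show n + (i+j) + 1 = n+i+j+1 from by omega]
    exact_mod_cast key
  have hn : (0:ℝ) < (Nat.factorial n : ℝ) := by positivity
  nlinarith [hn]

lemma strict2 (n : ℕ) : c n 2 < ((n : ℝ) + 1) * (c n 1 * c n 1) := by
  have key : (Nat.factorial (n+2) * Nat.factorial (n+2) : ℕ) <
      Nat.factorial (n+1) * Nat.factorial (n+3) := by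
    have e2 : Nat.factorial (n+2) = (n+2) * Nat.factorial (n+1) := Nat.factorial_succ _
    have e3 : Nat.factorial (n+3) = (n+3) * Nat.factorial (n+2) := Nat.factorial_succ _
    calc Nat.factorial (n+2) * Nat.factorial (n+2)
        = (n+2) * (Nat.factorial (n+1) * Nat.factorial (n+2)) := by rw [e2]; ring
      _ < (n+3) * (Nat.factorial (n+1) * Nat.factorial (n+2)) := by
          exact mul_lt_mul_of_pos_right (by omega)
            (Nat.mul_pos (Nat.factorial_pos _) (Nat.factorial_pos _))
      _ = Nat.factorial (n+1) * Nat.factorial (n+3) := by rw [e3]; ring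
  have h1 : (0:ℝ) < Nat.factorial (n + 2 + 1) := by positivity
  have h2 : (0:ℝ) < (Nat.factorial (n+1+1) : ℝ) * Nat.factorial (n+1+1) := by positivity
  have hrhs : ((n : ℝ) + 1) * (c n 1 * c n 1)
      = (((n:ℝ)+1) * (Nat.factorial n * Nat.factorial n)) /
        ((Nat.factorial (n+1+1) : ℝ) * Nat.factorial (n+1+1)) := by
    unfold c; field_simp
  rw [hrhs]
  unfold c
  rw [div_lt_div_iff₀ h1 h2]
  have hfn : ((n:ℝ)+1) * Nat.factorial n = Nat.factorial (n+1) := by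
    rw [Nat.factorial_succ]; push_cast; ring
  have hcast : ((Nat.factorial (n+1+1) : ℝ) * Nat.factorial (n+1+1)) <
      ((n:ℝ)+1) * Nat.factorial n * Nat.factorial (n+2+1) := by
    rw [hfn, show n+1+1 = n+2 from rfl, show n+2+1 = n+3 from rfl]
    exact_mod_cast key
  have hn : (0:ℝ) < (Nat.factorial n : ℝ) := by positivity
  nlinarith [hn]

lemma summable_c (n : ℕ) (b : ℝ) (hb : 0 ≤ b) : Summable (fun k => c n k * b ^ k) := by
  apply Summable.of_nonneg_of_le (fun k => mul_nonneg (c_pos n k).le (pow_nonneg hb k))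
    (fun k => ?_) (Real.summable_pow_div_factorial b)
  calc c n k * b ^ k ≤ (1 / (Nat.factorial k : ℝ)) * b ^ k := by
        apply mul_le_mul_of_nonneg_right (c_le n k) (by positivity)
    _ = b ^ k / (Nat.factorial k : ℝ) := by ring

noncomputable def phi (n : ℕ) (b : ℝ) : ℝ := ∑' k, c n k * b ^ k

lemma phi_spec (n : ℕ) (b : ℝ) :
    Real.exp b = T n b + b ^ (n + 1) * phi n b / (Nat.factorial n : ℝ) := by
  have hs : Summable (fun j : ℕ => b ^ j / (Nat.factorial j : ℝ)) :=
    Real.summable_pow_div_factorial b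
  have hexp : Real.exp b = ∑' j : ℕ, b ^ j / (Nat.factorial j : ℝ) := by
    rw [Real.exp_eq_exp_ℝ, NormedSpace.exp_eq_tsum_div]
  rw [hexp, ← Summable.sum_add_tsum_nat_add (n + 1) hs]
  congr 1
  rw [phi, ← tsum_mul_left, ← tsum_div_const]
  apply tsum_congr
  intro k
  have h1 : k + (n + 1) = n + k + 1 := by omega
  rw [h1]
  have h2 : (Nat.factorial n : ℝ) ≠ 0 := by positivity
  have h3 : (Nat.factorial (n + k + 1) : ℝ) ≠ 0 := by positivity
  unfold c
  field_simp
  ring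

lemma V_pos (n : ℕ) {b : ℝ} (hb : 0 < b) :
    0 < ((n : ℝ) + 1) * (phi n b) ^ 2 - (b - n) * phi n b - 1 := by
  have hb0 : (0:ℝ) ≤ b := hb.le
  set f : ℕ → ℝ := fun k => c n k * b ^ k with hf
  have hsum : Summable f := summable_c n b hb0
  have hnn : ∀ k, 0 ≤ f k := fun k => mul_nonneg (c_pos n k).le (pow_nonneg hb0 k)
  have hnorm : Summable (fun k => ‖f k‖) :=
    hsum.congr (fun k => (Real.norm_of_nonneg (hnn k)).symm)
  set A : ℕ → ℝ := fun k => ∑ i ∈ range (k+1), c n i * c n (k - i) with hA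
  have hfk : ∀ k, (∑ i ∈ range (k+1), f i * f (k - i)) = A k * b ^ k := by
    intro k
    rw [hA]
    rw [Finset.sum_mul]
    apply Finset.sum_congr rfl
    intro i hi
    have hik : i ≤ k := Nat.lt_succ_iff.mp (Finset.mem_range.mp hi)
    have hbb : b ^ i * b ^ (k - i) = b ^ k := by
      rw [← pow_add]; congr 1; omega
    simp only [hf]
    rw [mul_mul_mul_comm, hbb]
  have hC : phi n b * phi n b = ∑' k, A k * b ^ k := by
    rw [phi, tsum_mul_tsum_eq_tsum_sum_range_of_summable_norm hnorm hnorm]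
    exact tsum_congr hfk
  have hCsum : Summable (fun k => A k * b ^ k) := by
    have h1 := summable_norm_sum_mul_range_of_summable_norm hnorm hnorm
    have h2 : Summable (fun k => ∑ i ∈ range (k+1), f i * f (k - i)) := h1.of_norm
    exact h2.congr hfk
  -- coefficient inequalities
  have hw : ∀ k, c n k ≤ ((n:ℝ)+1) * A (k+1) + n * c n (k+1) := by
    intro k
    have hterm : ∀ i ∈ range (k+2), c n (k+1) ≤ ((n:ℝ)+1) * (c n i * c n (k+1-i)) := by
      intro i hi
      have hik : i ≤ k+1 := Nat.lt_succ_iff.mp (Finset.mem_range.mp hi)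
      have := term_ineq n i (k+1-i)
      rwa [show i + (k+1-i) = k+1 from by omega] at this
    have hsumge : ((k:ℝ)+2) * c n (k+1) ≤ ((n:ℝ)+1) * A (k+1) := by
      have h1 : ∑ _i ∈ range (k+2), c n (k+1) ≤
          ∑ i ∈ range (k+2), ((n:ℝ)+1) * (c n i * c n (k+1-i)) :=
        Finset.sum_le_sum hterm
      rw [Finset.sum_const, Finset.card_range] at h1
      rw [hA, Finset.mul_sum]
      calc ((k:ℝ)+2) * c n (k+1) = (k+2 : ℕ) • c n (k+1) := by
            rw [nsmul_eq_mul]; push_cast; ring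
        _ ≤ _ := h1
    have hcs := c_succ n k
    nlinarith [c_pos n (k+1)]
  have hw1 : c n 1 < ((n:ℝ)+1) * A 2 + n * c n 2 := by
    have hA2 : A 2 = c n 0 * c n 2 + c n 1 * c n 1 + c n 2 * c n 0 := by
      rw [hA]
      simp only [show (2:ℕ)+1 = 3 from rfl]
      rw [Finset.sum_range_succ, Finset.sum_range_succ, Finset.sum_range_succ,
        Finset.sum_range_zero]
      norm_num
    have h0 := c_zero' n
    have h2 := strict2 n
    have hcs : c n 1 = ((n:ℝ) + 3) * c n 2 := by
      have h := c_succ n 1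
      norm_num at h
      rw [h]; ring
    have e : ((n:ℝ)+1) * (c n 0 * c n 2) = c n 2 := by linear_combination (c n 2) * h0
    rw [hA2]
    nlinarith [c_pos n 2, e, h2, hcs]
  -- series identities
  have hsumA : Summable (fun k => (((n:ℝ)+1) * A k + n * c n k) * b ^ k) := by
    have h := (hCsum.mul_left ((n:ℝ)+1)).add (hsum.mul_left (n:ℝ))
    exact h.congr (fun k => by simp only [hf]; ring)
  have hphi2 : ((n:ℝ)+1) * (phi n b)^2 + n * phi n b
      = ∑' k, (((n:ℝ)+1) * A k + n * c n k) * b ^ k := by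
    rw [pow_two, hC, phi, ← tsum_mul_left, ← tsum_mul_left,
      ← Summable.tsum_add (hCsum.mul_left ((n:ℝ)+1)) (hsum.mul_left (n:ℝ))]
    exact tsum_congr (fun k => by simp only [hf]; ring)
  have hb2 : b * phi n b = ∑' k, c n k * b ^ (k+1) := by
    rw [phi, ← tsum_mul_left]
    exact tsum_congr (fun k => by ring)
  have hsumA' : Summable (fun k => (((n:ℝ)+1) * A (k+1) + n * c n (k+1)) * b ^ (k+1)) :=
    (summable_nat_add_iff 1).mpr hsumA
  have hsumc' : Summable (fun k => c n k * b ^ (k+1)) :=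
    (hsum.mul_left b).congr (fun k => by simp only [hf]; ring)
  have hshift1 : ∑' k, (((n:ℝ)+1) * A k + n * c n k) * b ^ k
      = 1 + ∑' k, (((n:ℝ)+1) * A (k+1) + n * c n (k+1)) * b ^ (k+1) := by
    rw [Summable.tsum_eq_zero_add hsumA]
    congr 1
    have hA0 : A 0 = c n 0 * c n 0 := by
      rw [hA]; simp [Finset.sum_range_one]
    have h0 := c_zero' n
    rw [hA0, pow_zero, mul_one]
    nlinarith [h0]
  have hpos : 0 < ∑' k, ((((n:ℝ)+1) * A (k+1) + n * c n (k+1)) - c n k) * b ^ (k+1) := by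
    apply Summable.tsum_pos ((hsumA'.sub hsumc').congr (fun k => by ring))
      (fun k => mul_nonneg (sub_nonneg.2 (hw k)) (pow_nonneg hb0 _)) 1
    exact mul_pos (sub_pos.2 hw1) (pow_pos hb _)
  have e1 : ∑' k, ((((n:ℝ)+1) * A (k+1) + n * c n (k+1)) - c n k) * b ^ (k+1)
      = (∑' k, (((n:ℝ)+1) * A (k+1) + n * c n (k+1)) * b ^ (k+1))
        - ∑' k, c n k * b ^ (k+1) := by
    rw [← Summable.tsum_sub hsumA' hsumc']
    exact tsum_congr (fun k => by ring)
  have hfinal : ((n:ℝ)+1) * (phi n b)^2 - (b - n) * phi n b - 1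
      = ∑' k, ((((n:ℝ)+1) * A (k+1) + n * c n (k+1)) - c n k) * b ^ (k+1) := by
    rw [e1]
    have h2 : ∑' k, (((n:ℝ)+1) * A (k+1) + n * c n (k+1)) * b ^ (k+1)
        = (∑' k, (((n:ℝ)+1) * A k + n * c n k) * b ^ k) - 1 := by
      rw [hshift1]; ring
    rw [h2, ← hphi2, ← hb2]
    ring
  rw [hfinal]; exact hpos

lemma phi_pos (n : ℕ) {b : ℝ} (hb : 0 ≤ b) : 0 < phi n b := by
  apply Summable.tsum_pos (summable_c n b hb)
    (fun k => mul_nonneg (c_pos n k).le (pow_nonneg hb k)) 0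
  simpa using (c_pos n 0)

lemma phi_mono (n : ℕ) {x y : ℝ} (hx : 0 ≤ x) (hxy : x < y) : phi n x < phi n y := by
  have hy : 0 ≤ y := le_of_lt (hx.trans_lt hxy)
  have hsx := summable_c n x hx
  have hsy := summable_c n y hy
  rw [phi, phi, ← sub_pos, ← Summable.tsum_sub hsy hsx]
  apply Summable.tsum_pos (hsy.sub hsx)
    (fun k => by
      have : x ^ k ≤ y ^ k := pow_le_pow_left₀ hx hxy.le k
      nlinarith [c_pos n k]) 1
  have : x ^ 1 < y ^ 1 := by simpa using hxy
  nlinarith [c_pos n 1]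

lemma phi_le_small (n : ℕ) {x : ℝ} (hx : 0 ≤ x) (hx1 : x ≤ 1) :
    phi n x ≤ c n 0 + 3 * x := by
  have hsx := summable_c n x hx
  rw [phi, Summable.tsum_eq_zero_add hsx]
  simp only [pow_zero, mul_one]
  have hs1 : Summable (fun k : ℕ => c n (k+1) * x ^ (k+1)) := (summable_nat_add_iff 1).mpr hsx
  have hfac : Summable (fun k : ℕ => (1:ℝ) / Nat.factorial k) :=
    (Real.summable_pow_div_factorial 1).congr (fun k => by norm_num)
  have hs2 : Summable (fun k : ℕ => x * ((1:ℝ) / Nat.factorial k)) := hfac.mul_left x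
  have hterm : ∀ k : ℕ, c n (k+1) * x ^ (k+1) ≤ x * ((1:ℝ) / Nat.factorial k) := by
    intro k
    have h1 : c n (k+1) ≤ 1 / (Nat.factorial (k+1) : ℝ) := c_le n (k+1)
    have h1' : (1:ℝ) / Nat.factorial (k+1) ≤ 1 / Nat.factorial k := by
      apply one_div_le_one_div_of_le (by positivity)
      exact_mod_cast Nat.factorial_le (Nat.le_succ k)
    have h2 : x ^ (k+1) ≤ x := by
      calc x ^ (k+1) = x * x ^ k := by ring
        _ ≤ x * 1 := mul_le_mul_of_nonneg_left (pow_le_one₀ hx hx1) hx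
        _ = x := mul_one x
    calc c n (k+1) * x ^ (k+1) ≤ (1 / (Nat.factorial k : ℝ)) * x := by
          apply mul_le_mul (h1.trans h1') h2 (pow_nonneg hx _) (by positivity)
      _ = x * (1 / (Nat.factorial k : ℝ)) := by ring
  have hle : ∑' k : ℕ, c n (k+1) * x ^ (k+1) ≤ ∑' k : ℕ, x * ((1:ℝ) / Nat.factorial k) :=
    Summable.tsum_le_tsum hterm hs1 hs2
  have hsum3 : ∑' k : ℕ, x * ((1:ℝ) / Nat.factorial k) = x * Real.exp 1 := by
    rw [tsum_mul_left]
    congr 1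
    rw [Real.exp_eq_exp_ℝ, NormedSpace.exp_eq_tsum_div]
    exact tsum_congr (fun k => by norm_num)
  have hexp3 : Real.exp 1 ≤ 3 := by
    have := Real.exp_one_lt_d9
    linarith
  have : x * Real.exp 1 ≤ 3 * x := by nlinarith [Real.exp_pos 1]
  linarith [hle, hsum3 ▸ hle]

lemma T_hasDerivAt (n : ℕ) (x : ℝ) :
    HasDerivAt (fun s => T n s) (T n x - x ^ n / (Nat.factorial n : ℝ)) x := by
  have h : HasDerivAt (fun s : ℝ => ∑ k ∈ range (n+1), s ^ k / (Nat.factorial k : ℝ))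
      (∑ k ∈ range (n+1), ((k : ℝ) * x ^ (k-1)) / (Nat.factorial k : ℝ)) x := by
    apply HasDerivAt.fun_sum
    intro k _
    exact (hasDerivAt_pow k x).div_const _
  have hsum : (∑ k ∈ range (n+1), ((k : ℝ) * x ^ (k-1)) / (Nat.factorial k : ℝ))
      = T n x - x ^ n / (Nat.factorial n : ℝ) := by
    rw [Finset.sum_range_succ']
    have h0 : ((0:ℕ) : ℝ) * x ^ (0-1) / (Nat.factorial 0 : ℝ) = 0 := by norm_num
    rw [h0, add_zero]
    have hterm : ∀ i : ℕ, (((i+1:ℕ) : ℝ) * x ^ ((i+1)-1)) / (Nat.factorial (i+1) : ℝ)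
        = x ^ i / (Nat.factorial i : ℝ) := by
      intro i
      rw [show (i+1)-1 = i from rfl, Nat.factorial_succ, Nat.cast_mul]
      have h1 : ((i+1:ℕ) : ℝ) ≠ 0 := by positivity
      have h2 : (Nat.factorial i : ℝ) ≠ 0 := by positivity
      field_simp
    rw [Finset.sum_congr rfl (fun i _ => hterm i)]
    have : T n x = (∑ i ∈ range n, x ^ i / (Nat.factorial i : ℝ)) + x ^ n / (Nat.factorial n : ℝ) := by
      rw [T, Finset.sum_range_succ]
    rw [this]; ring
  rw [← hsum]
  exact h

lemma phi_eq (n : ℕ) {y : ℝ} (hy : y ≠ 0) :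
    phi n y = (Nat.factorial n : ℝ) * (Real.exp y - T n y) / y ^ (n+1) := by
  have h' : (Real.exp y - T n y) * (Nat.factorial n : ℝ) = y ^ (n+1) * phi n y := by
    rw [phi_spec n y]
    have h2 : (Nat.factorial n : ℝ) ≠ 0 := by positivity
    field_simp
    ring
  rw [eq_div_iff (pow_ne_zero (n+1) hy)]
  linear_combination -h'

lemma phi_hasDerivAt (n : ℕ) {x : ℝ} (hx : 0 < x) :
    HasDerivAt (phi n) (((x - ((n:ℝ)+1)) * phi n x + 1) / x) x := by
  have hu : HasDerivAt (fun y => (Nat.factorial n : ℝ) * (Real.exp y - T n y))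
      ((Nat.factorial n : ℝ) * (Real.exp x - (T n x - x ^ n / (Nat.factorial n : ℝ)))) x :=
    ((Real.hasDerivAt_exp x).sub (T_hasDerivAt n x)).const_mul _
  have hv : HasDerivAt (fun y : ℝ => y ^ (n+1)) (((n:ℝ)+1) * x ^ n) x := by
    have := hasDerivAt_pow (n+1) x
    simpa using this
  have hq := hu.div hv (pow_ne_zero _ (ne_of_gt hx))
  have hEv : phi n =ᶠ[nhds x] (fun y => (Nat.factorial n : ℝ) * (Real.exp y - T n y) / y ^ (n+1)) := by
    filter_upwards [IsOpen.mem_nhds isOpen_compl_singleton (by simpa using hx.ne' : x ∈ ({0}ᶜ : Set ℝ))]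
      with y hy
    exact phi_eq n (by simpa using hy)
  have hres := hq.congr_of_eventuallyEq hEv
  refine hres.congr_deriv ?_
  rw [phi_eq n hx.ne']
  have hxne : x ≠ 0 := hx.ne'
  have hfn : (Nat.factorial n : ℝ) ≠ 0 := by positivity
  field_simp
  ring

noncomputable def Uf (n : ℕ) (b : ℝ) : ℝ :=
  b - ((n:ℝ)+1) - Real.log (((n:ℝ)+1) * phi n b) + (phi n b)⁻¹

lemma Uf_hasDerivAt (n : ℕ) {x : ℝ} (hx : 0 < x) :
    HasDerivAt (Uf n)
      ((((n:ℝ)+1) * (phi n x)^2 - (x - n) * phi n x - 1) / (x * (phi n x)^2)) x := by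
  have hp : 0 < phi n x := phi_pos n hx.le
  have hd := phi_hasDerivAt n hx
  set D := ((x - ((n:ℝ)+1)) * phi n x + 1) / x with hD
  have hn1 : (0:ℝ) < (n:ℝ)+1 := by positivity
  have hlog : HasDerivAt (fun y => Real.log (((n:ℝ)+1) * phi n y))
      ((((n:ℝ)+1) * D) / (((n:ℝ)+1) * phi n x)) x :=
    HasDerivAt.log (hd.const_mul _) (by positivity)
  have hinv : HasDerivAt (fun y => (phi n y)⁻¹) (-D / (phi n x)^2) x := hd.inv hp.ne'
  have h1 : HasDerivAt (fun y : ℝ => y - ((n:ℝ)+1)) 1 x := (hasDerivAt_id x).sub_const _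
  have hU : HasDerivAt (Uf n) (1 - (((n:ℝ)+1) * D) / (((n:ℝ)+1) * phi n x) + (-D / (phi n x)^2)) x :=
    (h1.sub hlog).add hinv
  convert hU using 1
  rw [mul_div_mul_left _ _ hn1.ne', hD]
  field_simp
  ring

lemma Uf_strictMono (n : ℕ) : StrictMonoOn (Uf n) (Set.Ioi 0) := by
  apply strictMonoOn_of_deriv_pos (convex_Ioi 0)
  · intro y hy
    exact (Uf_hasDerivAt n hy).continuousAt.continuousWithinAt
  · intro y hy
    rw [interior_Ioi] at hy
    rw [(Uf_hasDerivAt n hy).deriv]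
    exact div_pos (V_pos n hy) (mul_pos hy (pow_pos (phi_pos n hy.le) 2))

lemma Uf_eps (n : ℕ) {ε : ℝ} (h0 : 0 < ε) (h1 : ε ≤ 1) :
    -(6*((n:ℝ)+1)^2) * ε ≤ Uf n ε := by
  have hp : 0 < phi n ε := phi_pos n h0.le
  have hup : phi n ε ≤ c n 0 + 3*ε := phi_le_small n h0.le h1
  have hc0 : ((n:ℝ)+1) * c n 0 = 1 := c_zero' n
  have hn1 : (0:ℝ) < (n:ℝ)+1 := by positivity
  have hlog : Real.log (((n:ℝ)+1) * phi n ε) ≤ ((n:ℝ)+1) * phi n ε - 1 :=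
    Real.log_le_sub_one_of_pos (by positivity)
  have hlog2 : ((n:ℝ)+1) * phi n ε - 1 ≤ 3*((n:ℝ)+1)*ε := by nlinarith [hup, hc0]
  have hinv : ((n:ℝ)+1) - 3*((n:ℝ)+1)^2*ε ≤ (phi n ε)⁻¹ := by
    rcases le_or_gt (((n:ℝ)+1) - 3*((n:ℝ)+1)^2*ε) 0 with h|h
    · exact h.trans (inv_pos.mpr hp).le
    · rw [← one_div, le_div_iff₀ hp]
      have e2 : 3*((n:ℝ)+1)^2*ε*(c n 0) = 3*((n:ℝ)+1)*ε := by
        linear_combination 3*((n:ℝ)+1)*ε*hc0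
      nlinarith [mul_le_mul_of_nonneg_left hup h.le, hc0, e2, sq_nonneg (((n:ℝ)+1)*ε)]
  have hnn : (0:ℝ) ≤ (n:ℝ) * (((n:ℝ)+1) * ε) :=
    mul_nonneg (Nat.cast_nonneg n) (mul_nonneg hn1.le h0.le)
  rw [Uf]
  nlinarith [hlog.trans hlog2, hinv, h0, hnn]

lemma Uf_nonneg (n : ℕ) {x : ℝ} (hx : 0 < x) : 0 ≤ Uf n x := by
  by_contra hneg
  push_neg at hneg
  set K : ℝ := 6*((n:ℝ)+1)^2 with hK
  have hK0 : 0 < K := by positivity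
  set ε : ℝ := min (x/2) (min 1 ((-Uf n x)/(2*K))) with hε
  have hε0 : 0 < ε := by
    apply lt_min (by linarith)
    apply lt_min one_pos
    apply div_pos (by linarith) (by linarith)
  have hε1 : ε ≤ 1 := le_trans (min_le_right _ _) (min_le_left _ _)
  have hεx : ε < x := lt_of_le_of_lt (min_le_left _ _) (by linarith)
  have hεc : K * ε ≤ (-Uf n x)/2 := by
    have h1 : ε ≤ (-Uf n x)/(2*K) := le_trans (min_le_right _ _) (min_le_right _ _)
    calc K * ε ≤ K * ((-Uf n x)/(2*K)) := mul_le_mul_of_nonneg_left h1 hK0.le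
      _ = (-Uf n x)/2 := by field_simp
  have hmono := Uf_strictMono n (Set.mem_Ioi.mpr hε0) (Set.mem_Ioi.mpr hx) hεx
  have heps := Uf_eps n hε0 hε1
  have heps' : -(K*ε) ≤ Uf n ε := by rw [hK]; linarith [heps]
  linarith [hmono, heps', hεc, hneg]

lemma Uf_pos (n : ℕ) {x : ℝ} (hx : 0 < x) : 0 < Uf n x := by
  have h2 : 0 < x/2 := by linarith
  have := Uf_strictMono n (Set.mem_Ioi.mpr h2) (Set.mem_Ioi.mpr hx) (by linarith)
  linarith [Uf_nonneg n h2]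

theorem stmt7 (n : ℕ) (δ : ℝ) (hδ : δ ∈ Set.Ioo 0 ((n : ℝ) + 1))
    (s₀ : ℝ) (hs₀ : 0 < s₀)
    (heq : Real.exp s₀ = T n s₀ + s₀ ^ (n + 1) / (δ * Nat.factorial n)) :
    Real.log (((n : ℝ) + 1) / δ) + ((n : ℝ) + 1 - δ) < s₀ ∧
    s₀ < ((n : ℝ) + 1 - δ) + ((n : ℝ) + 1 - δ) / δ := by
  obtain ⟨hδ0, hδ1⟩ := hδ
  have hfn : (Nat.factorial n : ℝ) ≠ 0 := by positivity
  -- phi n s₀ = 1/δ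
  have hφs : phi n s₀ = 1/δ := by
    have h1 := phi_spec n s₀
    rw [heq] at h1
    have h2 : s₀ ^ (n+1) / (δ * Nat.factorial n) = s₀ ^ (n+1) * phi n s₀ / Nat.factorial n := by
      linarith
    rw [div_eq_div_iff (by positivity) (by positivity)] at h2
    have hpos : (0:ℝ) < s₀^(n+1) * Nat.factorial n := by positivity
    have h4 : (s₀^(n+1) * (Nat.factorial n : ℝ)) * 1 = (s₀^(n+1) * Nat.factorial n) * (phi n s₀ * δ) := by
      linear_combination h2
    have h5 := mul_left_cancel₀ hpos.ne' h4
    rw [eq_div_iff hδ0.ne']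
    linarith [h5]
  constructor
  · -- lower bound
    set a : ℝ := Real.log (((n:ℝ)+1)/δ) + ((n:ℝ)+1-δ) with ha
    have hlogpos : 0 < Real.log (((n:ℝ)+1)/δ) :=
      Real.log_pos (by rw [lt_div_iff₀ hδ0]; linarith)
    have ha0 : 0 < a := by rw [ha]; nlinarith [hlogpos, hδ1]
    have hUa := Uf_pos n ha0
    have hφa : phi n a < 1/δ := by
      by_contra hcon
      push_neg at hcon
      have hp : 0 < phi n a := phi_pos n ha0.le
      have hlog_ge : Real.log (((n:ℝ)+1)/δ) ≤ Real.log (((n:ℝ)+1) * phi n a) := by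
        apply Real.log_le_log (by positivity)
        calc ((n:ℝ)+1)/δ = ((n:ℝ)+1) * (1/δ) := by ring
          _ ≤ ((n:ℝ)+1) * phi n a := mul_le_mul_of_nonneg_left hcon (by positivity)
      have hinv_le : (phi n a)⁻¹ ≤ δ := by
        have h6 : δ⁻¹ ≤ phi n a := by rw [← one_div]; exact hcon
        calc (phi n a)⁻¹ ≤ (δ⁻¹)⁻¹ := inv_anti₀ (by positivity) h6
          _ = δ := inv_inv δ
      rw [Uf] at hUa
      have he : a - ((n:ℝ)+1) = Real.log (((n:ℝ)+1)/δ) - δ := by rw [ha]; ring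
      linarith [hUa, hlog_ge, hinv_le, he]
    by_contra hcon2
    push_neg at hcon2
    rcases eq_or_lt_of_le hcon2 with he|hl
    · rw [← he, hφs] at hφa; exact lt_irrefl _ hφa
    · have h7 := phi_mono n hs₀.le hl
      rw [hφs] at h7; linarith
  · -- upper bound
    set m : ℝ := (n:ℝ)+1-δ with hm
    have hm0 : 0 < m := by rw [hm]; linarith
    set bb : ℝ := m + m/δ with hbb
    have hbb0 : 0 < bb := by rw [hbb]; positivity
    have hV := V_pos n hbb0
    have hp : 0 < phi n bb := phi_pos n hbb0.le
    have hφb : 1/δ < phi n bb := by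
      by_contra hcon
      push_neg at hcon
      have hfac : (((n:ℝ)+1)*(phi n bb)^2 - (bb - n)*(phi n bb) - 1)
          = (phi n bb - 1/δ) * (((n:ℝ)+1)*(phi n bb) + δ) := by
        have hd : bb - (n:ℝ) = ((n:ℝ)+1)/δ - δ := by
          rw [hbb, hm]; field_simp; ring
        rw [hd]; field_simp; ring
      rw [hfac] at hV
      have h8 : phi n bb - 1/δ ≤ 0 := by linarith
      have h9 : (0:ℝ) ≤ ((n:ℝ)+1)*phi n bb + δ := by nlinarith [hp, hδ0]
      nlinarith [mul_nonneg (neg_nonneg.mpr h8) h9, hV]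
    by_contra hcon2
    push_neg at hcon2
    rcases eq_or_lt_of_le hcon2 with he|hl
    · rw [he, hφs] at hφb; exact lt_irrefl _ hφb
    · have h7 := phi_mono n hbb0.le hl
      rw [hφs] at h7; linarith
end
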